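/- arXiv:2501.05304 — 3 statements merged into one kernel-verified Lean document; each statement's English description precedes it below -/
import Mathlib

section
/- Let M > 0 and let φ_M solve the truncated mean-field equation i∂_t φ_M = A φ_M + F_M(φ_M) with ‖φ₀‖_{ℓ²} = 1 and φ_M(0) = φ₀. Then: (i) ‖φ_M(t)‖_{ℓ²} = ‖φ₀‖_{ℓ²} = 1 for all t; (ii) ⟨φ_M(t), 𝒩 φ_M(t)⟩ = ⟨φ₀, 𝒩 φ₀⟩ for all t; (iii) ⟨φ_M(t), h_M^{α_M(t)} φ_M(t)⟩ = ⟨φ₀, h_M^{α_M(0)} φ₀⟩ for all t, where h_M^{α_M} := A − J(α_M a*_M + conj(α_M) a_M − |α_M|²); (iv) |α_M(t)| ≤ ‖𝒩^{1/2} φ₀‖_{ℓ²} for all t. -/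
namespace BoseHubbard

noncomputable section

open scoped BigOperators ComplexConjugate
open Complex Filter

/-! ## The one-lattice-site Hilbert space ℓ²(ℂ), modeled by coefficient sequences -/

/-- A vector of `ℓ²(ℂ)`, given by its coefficients in the canonical basis `(|n⟩)ₙ`. -/
abbrev Seq : Type := ℕ → ℂ

/-- The `ℓ²` inner product `⟨φ, ψ⟩` (antilinear in the first argument). -/
def sInner (φ ψ : Seq) : ℂ := ∑' n, conj (φ n) * ψ n

/-- The squared `ℓ²` norm `‖φ‖²`. -/
def sNormSq (φ : Seq) : ℝ := ∑' n, ‖φ n‖ ^ 2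

/-- Membership in `ℓ²(ℂ)`. -/
def MemL2 (φ : Seq) : Prop := Summable fun n => ‖φ n‖ ^ 2

/-- The moment `⟨φ, 𝒩^k φ⟩` of the number operator, for a real exponent `k`. -/
def Nmom (k : ℝ) (φ : Seq) : ℝ := ∑' n : ℕ, (n : ℝ) ^ k * ‖φ n‖ ^ 2

/-- Finiteness of the moment `⟨φ, 𝒩^k φ⟩`. -/
def MemNmom (k : ℝ) (φ : Seq) : Prop := Summable fun n : ℕ => (n : ℝ) ^ k * ‖φ n‖ ^ 2

/-- The shifted moment `⟨φ, (𝒩+l)^k φ⟩`. -/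
def NmomShift (k : ℝ) (l : ℕ) (φ : Seq) : ℝ := ∑' n : ℕ, ((n : ℝ) + l) ^ k * ‖φ n‖ ^ 2

/-- Membership in the domain `D(𝒩^k)`, i.e. `φ ∈ ℓ²` and `𝒩^k φ ∈ ℓ²`. -/
def MemDomN (k : ℝ) (φ : Seq) : Prop := MemL2 φ ∧ MemNmom (2 * k) φ

/-- The annihilation operator `a`, acting on coefficients. -/
def opA (φ : Seq) : Seq := fun n => (Real.sqrt ((n : ℝ) + 1) : ℂ) * φ (n + 1)

/-- The creation operator `a*`, acting on coefficients (note `Real.sqrt 0 = 0` at `n = 0`). -/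
def opAd (φ : Seq) : Seq := fun n => ((Real.sqrt (n : ℝ)) : ℂ) * φ (n - 1)

/-- The order parameter `α_φ = ⟨φ, a φ⟩`. -/
def alphaOf (φ : Seq) : ℂ := sInner φ (opA φ)

/-- The mean-field operator
`h^φ = -J(α_φ a* + conj α_φ a - |α_φ|²) + (J-μ)𝒩 + (U/2)𝒩(𝒩-1)` applied to `ψ`. -/
def hMF (J μ U : ℝ) (φ ψ : Seq) : Seq := fun n =>
  (-(J : ℂ)) * (alphaOf φ * opAd ψ n + conj (alphaOf φ) * opA ψ n
      - ((‖alphaOf φ‖ : ℂ)) ^ 2 * ψ n)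
    + (((J : ℂ) - (μ : ℂ)) * (n : ℂ) + ((U : ℂ) / 2) * (n : ℂ) * ((n : ℂ) - 1)) * ψ n

/-- `φ : ℝ → Seq` solves the mean-field equation `i ∂ₜ φ(t) = h^{φ(t)} φ(t)`
(coefficientwise, with `φ(t) ∈ ℓ²` and finite number of particles). -/
def IsMFSolution (J μ U : ℝ) (φ : ℝ → Seq) : Prop :=
  (∀ t, MemL2 (φ t)) ∧ (∀ t, MemNmom 1 (φ t)) ∧
    ∀ t n, HasDerivAt (fun s => φ s n) (-Complex.I * hMF J μ U (φ t) (φ t) n) t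

/-! ## The truncated mean-field dynamics -/

/-- The eigenvalue of the linear operator `A = (J-μ)𝒩 + (U/2)𝒩(𝒩-1)` on `|n⟩`. -/
def Acoef (J μ U : ℝ) (n : ℕ) : ℂ :=
  ((J : ℂ) - (μ : ℂ)) * (n : ℂ) + ((U : ℂ) / 2) * (n : ℂ) * ((n : ℂ) - 1)

/-- The linear operator `A = (J-μ)𝒩 + (U/2)𝒩(𝒩-1)`. -/
def opALin (J μ U : ℝ) (ψ : Seq) : Seq := fun n => Acoef J μ U n * ψ n

/-- The unitary group `e^{-itA}` generated by `A`. -/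
def expA (J μ U : ℝ) (t : ℝ) (φ : Seq) : Seq :=
  fun n => Complex.exp (-Complex.I * (t : ℂ) * Acoef J μ U n) * φ n

/-- The truncated annihilation operator `a_M = a 1_{𝒩 ≤ M}`. -/
def opAM (M : ℝ) (φ : Seq) : Seq :=
  fun n => if (n : ℝ) + 1 ≤ M then (Real.sqrt ((n : ℝ) + 1) : ℂ) * φ (n + 1) else 0

/-- The truncated creation operator `a*_M = 1_{𝒩 ≤ M} a*`. -/
def opAdM (M : ℝ) (φ : Seq) : Seq := fun n => if (n : ℝ) ≤ M then opAd φ n else 0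

/-- The truncated order parameter `α_M = ⟨φ, a_M φ⟩`. -/
def alphaM (M : ℝ) (φ : Seq) : ℂ := sInner φ (opAM M φ)

/-- The truncated nonlinearity `F_M(φ) = -J(α_M a*_M + conj α_M a_M - |α_M|²) φ`. -/
def FM (J M : ℝ) (φ : Seq) : Seq := fun n =>
  (-(J : ℂ)) * (alphaM M φ * opAdM M φ n + conj (alphaM M φ) * opAM M φ n
    - ((‖alphaM M φ‖ : ℂ)) ^ 2 * φ n)

/-- The truncated mean-field operator `h_M^{α_M(φ)} = A - J(α_M a*_M + conj α_M a_M - |α_M|²)`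
applied to `ψ`. -/
def hTrunc (J μ U M : ℝ) (φ ψ : Seq) : Seq := fun n =>
  opALin J μ U ψ n + (-(J : ℂ)) * (alphaM M φ * opAdM M ψ n + conj (alphaM M φ) * opAM M ψ n
    - ((‖alphaM M φ‖ : ℂ)) ^ 2 * ψ n)

/-- Differentiability in the `ℓ²` sense at time `t`, with derivative `v`. -/
def HasL2DerivAt (φ : ℝ → Seq) (v : Seq) (t : ℝ) : Prop :=
  Tendsto (fun h : ℝ => sNormSq (fun n => (φ (t + h) n - φ t n) / (h : ℂ) - v n))
    (nhdsWithin 0 {(0 : ℝ)}ᶜ) (nhds 0)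

/-- `φ : ℝ → Seq` is a (global, strong) solution of the truncated mean-field equation
`i ∂ₜ φ_M = A φ_M + F_M(φ_M)`, taking values in `D(𝒩²)`. -/
def IsTruncSolution (J μ U M : ℝ) (φ : ℝ → Seq) : Prop :=
  (∀ t, MemDomN 2 (φ t)) ∧
    ∀ t, HasL2DerivAt φ (fun n => -Complex.I * hTrunc J μ U M (φ t) (φ t) n) t

/-- Continuity of `t ↦ φ(t)` in the norm of `D(𝒩²)`. -/
def ContinuousInDom2 (φ : ℝ → Seq) : Prop :=
  ∀ t, Tendsto (fun s =>
      sNormSq (fun n => φ s n - φ t n) + sNormSq (fun n => ((n : ℂ)) ^ 2 * (φ s n - φ t n)))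
    (nhds t) (nhds 0)

/-- Continuity of `t ↦ v(t)` in the `ℓ²` norm. -/
def ContinuousInL2 (v : ℝ → Seq) : Prop :=
  ∀ t, Tendsto (fun s => sNormSq (fun n => v s n - v t n)) (nhds t) (nhds 0)

/-- The (untruncated) nonlinearity `F(φ) = -J(α_φ a* + conj α_φ a - |α_φ|²) φ`. -/
def Ffull (J : ℝ) (φ : Seq) : Seq := fun n =>
  (-(J : ℂ)) * (alphaOf φ * opAd φ n + conj (alphaOf φ) * opA φ n
    - ((‖alphaOf φ‖ : ℂ)) ^ 2 * φ n)

/-! ## Operators on ℓ²(ℂ), given by their kernels (matrices) in the canonical basis -/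

/-- The identity kernel. -/
def idKer : ℕ → ℕ → ℂ := fun m n => if m = n then 1 else 0

/-- The kernel of the rank-one projection `p_φ = |φ⟩⟨φ|`. -/
def projKer (φ : Seq) : ℕ → ℕ → ℂ := fun m n => φ m * conj (φ n)

/-- The kernel of `q_φ = 1 - p_φ`. -/
def qKer (φ : Seq) : ℕ → ℕ → ℂ := fun m n => idKer m n - projKer φ m n

/-- The product of two kernels. -/
def kerMul (A B : ℕ → ℕ → ℂ) : ℕ → ℕ → ℂ := fun m n => ∑' k, A m k * B k n

/-- The trace of a kernel. -/
def kerTr (A : ℕ → ℕ → ℂ) : ℂ := ∑' m, A m m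

/-- A kernel is positive semidefinite: hermitian with nonnegative quadratic form. -/
def kerPosSemidef (γ : ℕ → ℕ → ℂ) : Prop :=
  (∀ m n, γ n m = conj (γ m n)) ∧
    ∀ v : ℕ →₀ ℂ, 0 ≤ (∑ m ∈ v.support, ∑ n ∈ v.support, conj (v m) * γ m n * v n).re

/-- `c` is a bound for the operator norm of the kernel `B`. -/
def kerOpNormBound (B : ℕ → ℕ → ℂ) (c : ℝ) : Prop :=
  ∀ v w : ℕ →₀ ℂ,
    ‖∑ m ∈ v.support, ∑ n ∈ w.support, conj (v m) * B m n * w n‖ ≤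
      c * Real.sqrt (∑ m ∈ v.support, ‖v m‖ ^ 2) * Real.sqrt (∑ n ∈ w.support, ‖w n‖ ^ 2)

/-- The operator norm of a kernel. -/
def kerOpNorm (B : ℕ → ℕ → ℂ) : ℝ := sInf {c | 0 ≤ c ∧ kerOpNormBound B c}

/-- The trace norm `‖T‖_{L¹}`, via duality with bounded operators:
`‖T‖₁ = sup { |Tr(T B)| : ‖B‖ ≤ 1 }`. -/
def traceNorm (T : ℕ → ℕ → ℂ) : ℝ :=
  sSup {r | ∃ B z, kerOpNormBound B 1 ∧
      HasSum (fun q : ℕ × ℕ => T q.1 q.2 * B q.2 q.1) z ∧ r = ‖z‖}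

/-- The kernel of `q_φ g(𝒩) q_φ` for a diagonal operator `g(𝒩)`. -/
def qDiagq (g : ℕ → ℝ) (φ : Seq) : ℕ → ℕ → ℂ := fun m n =>
  (if m = n then ((g m : ℝ) : ℂ) else 0)
    - (((g m : ℝ) : ℂ) + ((g n : ℝ) : ℂ)) * (φ m * conj (φ n))
    + (∑' j, ((g j : ℝ) : ℂ) * ((‖φ j‖ : ℂ)) ^ 2) * (φ m * conj (φ n))

/-! ## The lattice `Λ = (ℤ/LZ)^d` and the Fock space `ℱ = ℓ²(ℂ)^{⊗|Λ|}` -/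

/-- A lattice site of `Λ = (ℤ/Lℤ)^d`. -/
abbrev Site (d L : ℕ) : Type := Fin d → ZMod L

/-- An occupation-number configuration, labeling the canonical basis of `ℱ`. -/
abbrev Cfg (d L : ℕ) : Type := Site d L → ℕ

/-- A vector of the Fock space `ℱ`, given by its coefficients. -/
abbrev FSeq (d L : ℕ) : Type := Cfg d L → ℂ

/-- The kernel of an operator on the Fock space `ℱ`. -/
abbrev FKer (d L : ℕ) : Type := Cfg d L → Cfg d L → ℂ

/-- Nearest neighbours in `Λ`. -/
def nbr {d L : ℕ} (x y : Site d L) : Prop :=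
  ∃ i : Fin d, y = Function.update x i (x i + 1) ∨ y = Function.update x i (x i - 1)

/-- The annihilation operator `a_x` at site `x`. -/
def fA {d L : ℕ} (x : Site d L) (ψ : FSeq d L) : FSeq d L :=
  fun n => (Real.sqrt ((n x : ℝ) + 1) : ℂ) * ψ (Function.update n x (n x + 1))

/-- The creation operator `a*_x` at site `x`. -/
def fAd {d L : ℕ} (x : Site d L) (ψ : FSeq d L) : FSeq d L :=
  fun n => ((Real.sqrt (n x : ℝ)) : ℂ) * ψ (Function.update n x (n x - 1))

open scoped Classical in
/-- The Bose–Hubbard Hamiltonian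
`H_d = -(J/2d) Σ_{⟨x,y⟩}(a*_x a_y + a*_y a_x) + Σ_x ((J-μ)𝒩_x + (U/2)𝒩_x(𝒩_x-1))`,
where the sum over unordered nearest-neighbour pairs of `a*_x a_y + a*_y a_x` is written as
the sum over ordered nearest-neighbour pairs of `a*_x a_y`. -/
def HBH (d L : ℕ) [NeZero L] (J μ U : ℝ) (ψ : FSeq d L) : FSeq d L := fun n =>
  (-(J : ℂ) / (2 * (d : ℂ))) *
      ∑ x : Site d L, ∑ y : Site d L, (if nbr x y then fAd x (fA y ψ) n else 0)
    + (∑ x : Site d L, Acoef J μ U (n x)) * ψ n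

/-- `Ψ : ℝ → FSeq d L` is a normalized solution of the Schrödinger equation
`i ∂ₜ Ψ = H_d Ψ` (coefficientwise). -/
def IsSchrodingerSolution (d L : ℕ) [NeZero L] (J μ U : ℝ) (Ψ : ℝ → FSeq d L) : Prop :=
  (∀ t, HasSum (fun n => ‖Ψ t n‖ ^ 2) 1) ∧
    ∀ t n, HasDerivAt (fun s => Ψ s n) (-Complex.I * HBH d L J μ U (Ψ t) n) t

/-- `γ : ℝ → FKer d L` solves the von Neumann equation `i ∂ₜ γ = [H_d, γ]`
(coefficientwise; we use that the matrix of `H_d` in the canonical basis is real symmetric). -/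
def IsVNSolution (d L : ℕ) [NeZero L] (J μ U : ℝ) (γ : ℝ → FKer d L) : Prop :=
  ∀ t m n, HasDerivAt (fun s => γ s m n)
    (-Complex.I * (HBH d L J μ U (fun k => γ t k n) m - HBH d L J μ U (fun k => γ t m k) n)) t

/-- A Fock-space kernel is positive semidefinite. -/
def FKerPosSemidef {d L : ℕ} (γ : FKer d L) : Prop :=
  (∀ m n, γ n m = conj (γ m n)) ∧
    ∀ v : Cfg d L →₀ ℂ, 0 ≤ (∑ m ∈ v.support, ∑ n ∈ v.support, conj (v m) * γ m n * v n).re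

/-- (Diagonal) trace-class condition for a positive Fock-space kernel. -/
def FKerTraceClass {d L : ℕ} (γ : FKer d L) : Prop := Summable fun n => (γ n n).re

/-- The kernel has trace one. -/
def FKerTraceOne {d L : ℕ} (γ : FKer d L) : Prop := HasSum (fun n => γ n n) 1

/-- The one-lattice-site reduced density matrix
`γ^{(1)} = (1/|Λ|) Σ_{x∈Λ} Tr_{Λ∖{x}} γ`, as a kernel on `ℕ`. -/
def reduced1 (d L : ℕ) [NeZero L] (γ : FKer d L) : ℕ → ℕ → ℂ := fun j k =>
  (1 / ((L : ℂ) ^ d)) * ∑ x : Site d L,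
    ∑' c : Cfg d L, if c x = 0 then γ (Function.update c x j) (Function.update c x k) else 0

/-- The trace `Tr(γ H_d)` (using that the matrix of `H_d` is real symmetric). -/
def trGammaH (d L : ℕ) [NeZero L] (J μ U : ℝ) (γ : FKer d L) : ℂ :=
  ∑' n : Cfg d L, HBH d L J μ U (fun k => γ n k) n

/-! ## Wave-function expressions on Fock space -/

/-- The inner product on Fock space. -/
def fInner {d L : ℕ} (Φ Ψ : FSeq d L) : ℂ := ∑' n, conj (Φ n) * Ψ n

/-- The projection `p_x = |φ⟩⟨φ|` acting at site `x`. -/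
def fP {d L : ℕ} (φ : Seq) (x : Site d L) (ψ : FSeq d L) : FSeq d L :=
  fun n => φ (n x) * ∑' k, conj (φ k) * ψ (Function.update n x k)

/-- The complementary projection `q_x = 1 - p_x` acting at site `x`. -/
def fQ {d L : ℕ} (φ : Seq) (x : Site d L) (ψ : FSeq d L) : FSeq d L :=
  fun n => ψ n - fP φ x ψ n

/-- The mean-field operator `h^φ_x` acting at site `x`. -/
def fHmf {d L : ℕ} (J μ U : ℝ) (φ : Seq) (x : Site d L) (ψ : FSeq d L) : FSeq d L :=
  fun n => (-(J : ℂ)) * (alphaOf φ * fAd x ψ n + conj (alphaOf φ) * fA x ψ n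
      - ((‖alphaOf φ‖ : ℂ)) ^ 2 * ψ n)
    + Acoef J μ U (n x) * ψ n

/-- `K^{(2)}_{x,y} = a*_x a_y + a*_y a_x`. -/
def fK2 {d L : ℕ} (x y : Site d L) (ψ : FSeq d L) : FSeq d L :=
  fun n => fAd x (fA y ψ) n + fAd y (fA x ψ) n

/-- `K^{(3)}_{x,y} = K^{(2)}_{x,y} - α_φ a*_x - conj α_φ a_x`. -/
def fK3 {d L : ℕ} (φ : Seq) (x y : Site d L) (ψ : FSeq d L) : FSeq d L :=
  fun n => fK2 x y ψ n - alphaOf φ * fAd x ψ n - conj (alphaOf φ) * fA x ψ n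

/-- `K^{(4)}_{x,y} = K^{(3)}_{x,y} - α_φ a*_y - conj α_φ a_y + 2|α_φ|²`. -/
def fK4 {d L : ℕ} (φ : Seq) (x y : Site d L) (ψ : FSeq d L) : FSeq d L :=
  fun n => fK3 φ x y ψ n - alphaOf φ * fAd y ψ n - conj (alphaOf φ) * fA y ψ n
    + 2 * ((‖alphaOf φ‖ : ℂ)) ^ 2 * ψ n

open scoped Classical in
/-- The expectation `⟨Ψ, H̃ Ψ⟩` of the excitation Hamiltonian `H̃`; sums over unordered
nearest-neighbour pairs are written as half the sums over ordered pairs, and `+h.c.`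
contributes a factor `2 Re`. -/
def tildeHExp (d L : ℕ) [NeZero L] (J : ℝ) (φ : Seq) (Ψ : FSeq d L) : ℝ :=
  (-(J / (2 * d))) * (1 / 2) *
      ∑ x : Site d L, ∑ y : Site d L, (if nbr x y then
        2 * (fInner Ψ (fP φ x (fP φ y (fK2 x y (fQ φ x (fQ φ y Ψ)))))).re
          + 2 * (fInner Ψ (fP φ x (fQ φ y (fK2 x y (fQ φ x (fP φ y Ψ)))))).re
        else 0)
    + (-(J / d)) * (1 / 2) *
      ∑ x : Site d L, ∑ y : Site d L, (if nbr x y then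
        2 * (fInner Ψ (fP φ x (fQ φ y (fK3 φ x y (fQ φ x (fQ φ y Ψ)))))).re else 0)
    + (-(J / (2 * d))) * (1 / 2) *
      ∑ x : Site d L, ∑ y : Site d L, (if nbr x y then
        (fInner Ψ (fQ φ x (fQ φ y (fK4 φ x y (fQ φ x (fQ φ y Ψ)))))).re else 0)

/-- The quantity `g(t) = (1/|Λ|) Σ_x ⟨Ψ, (q_x 𝒩_x² q_x + q_x) Ψ⟩`. -/
def gFunc (d L : ℕ) [NeZero L] (φ : Seq) (Ψ : FSeq d L) : ℝ :=
  (1 / (L : ℝ) ^ d) * ∑ x : Site d L,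
    ((fInner Ψ (fQ φ x (fun n => ((n x : ℂ)) ^ 2 * fQ φ x Ψ n))).re
      + (fInner Ψ (fQ φ x Ψ)).re)

/-- The quantity `f(t) = (1/|Λ|) ⟨Ψ, (H_d + Σ_x (q_x h^φ_x q_x - h^φ_x + c q_x)) Ψ⟩`. -/
def fFunc (d L : ℕ) [NeZero L] (J μ U c : ℝ) (φ : Seq) (Ψ : FSeq d L) : ℝ :=
  (1 / (L : ℝ) ^ d) * (fInner Ψ (fun n => HBH d L J μ U Ψ n +
    ∑ x : Site d L,
      (fQ φ x (fHmf J μ U φ x (fQ φ x Ψ)) n - fHmf J μ U φ x Ψ n + (c : ℂ) * fQ φ x Ψ n))).re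

/-- The time-dependent constant `C̃(s)` in the Gronwall estimate for `f`. -/
def Ctilde (J U C1 : ℝ) (φ0 : Seq) (s : ℝ) : ℝ :=
  (C1 / U) * (1 + 1 / U + (Nmom 1 φ0) ^ 2) *
    (1 + ∑ j ∈ Finset.range 7,
      (8 * J * Real.sqrt (Nmom 1 φ0)) ^ j * NmomShift (4 - (j : ℝ) / 2) j φ0 * s ^ j
        / (Nat.factorial j))

/-!
The truncated operators `a_M`, `a*_M` only involve the coordinates `n ≤ M`. On the block of the
first `K ≥ ⌈M⌉ + 1` coordinates they are therefore mutually adjoint, the generator `h` of the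
equation `φ' = -i h φ` is symmetric, and the block quantities are finite sums which can be
differentiated coordinate by coordinate:
* for a weight with `w (n + 1) = w n + d` (`w = 1` for the norm, `w = n` for the number operator)
  one has `[a_M, w(𝒩)] = d a_M`, and the derivative of `⟪φ, w(𝒩) φ⟫_K` is a multiple of
  `conj α α - α conj α = 0`;
* the block energy `⟪φ, A φ⟫_K - J |α_M|²` has derivative `2 Re ⟪φ', (h - J |α_M|²) φ⟫_K`, which
  vanishes because `⟪h φ, h φ⟫_K` and `⟪φ, h φ⟫_K` are real.
Letting `K → ∞` gives (i)–(iii), using `⟪φ, h φ⟫ = ⟪φ, A φ⟫ - J |α_M|²` when `‖φ‖ = 1`.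
Finally (iv) is Cauchy–Schwarz: `|⟪φ, a_M φ⟫|² ≤ ‖φ‖² ‖a_M φ‖² ≤ ⟪φ, 𝒩 φ⟫`.
-/

open Finset Topology

theorem memL2_iff_memℓp {φ : Seq} : MemL2 φ ↔ Memℓp φ 2 := by
  rw [memℓp_gen_iff (by norm_num), MemL2]
  norm_num

theorem MemL2.norm_sq_le_sNormSq {φ : Seq} (hφ : MemL2 φ) (n : ℕ) : ‖φ n‖ ^ 2 ≤ sNormSq φ :=
  hφ.le_tsum n fun _ _ => sq_nonneg _

theorem sNormSq_nonneg (φ : Seq) : 0 ≤ sNormSq φ :=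
  tsum_nonneg fun _ => sq_nonneg _

theorem memNmom_of_le {k l : ℝ} {φ : Seq} (hkl : k ≤ l) (h0 : MemL2 φ) (hl : MemNmom l φ) :
    MemNmom k φ := by
  refine .of_nonneg_of_le (fun n => by positivity) (fun n => ?_) (hl.add h0)
  have hpow : (n : ℝ) ^ k ≤ (n : ℝ) ^ l + 1 := by
    rcases Nat.eq_zero_or_pos n with rfl | hn
    · simp only [Nat.cast_zero]
      linarith [Real.zero_rpow_le_one k, Real.rpow_nonneg (le_refl (0 : ℝ)) l]
    · linarith [Real.rpow_le_rpow_of_exponent_le (Nat.one_le_cast.2 hn) hkl]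
  nlinarith [sq_nonneg ‖φ n‖]

theorem memℓp_of_eq_zero_of_le {f : Seq} {p : ENNReal} (K : ℕ) (hf : ∀ n, K ≤ n → f n = 0) :
    Memℓp f p :=
  (memℓp_zero ((Set.finite_lt_nat K).subset fun n hn => by
    by_contra h; exact hn (hf n (not_lt.1 h)))).of_exponent_ge bot_le

theorem tsum_eq_tsum_of_sum_range_eventuallyEq {f g : ℕ → ℝ} (hf : Summable f) (hg : Summable g)
    (h : ∀ᶠ K in atTop, ∑ n ∈ range K, f n = ∑ n ∈ range K, g n) : ∑' n, f n = ∑' n, g n :=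
  tendsto_nhds_unique_of_eventuallyEq hf.hasSum.tendsto_sum_nat hg.hasSum.tendsto_sum_nat h

theorem HasL2DerivAt.hasDerivAt_apply {φ : ℝ → Seq} {v : Seq} {t : ℝ}
    (hφ : ∀ s, MemL2 (φ s)) (hv : MemL2 v) (h : HasL2DerivAt φ v t) (n : ℕ) :
    HasDerivAt (fun s => φ s n) (v n) t := by
  rw [hasDerivAt_iff_tendsto_slope_zero, tendsto_iff_norm_sub_tendsto_zero]
  refine squeeze_zero (fun _ => norm_nonneg _) (fun s => ?_)
    (by simpa using (Real.continuous_sqrt.tendsto 0).comp h)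
  have hquot : MemL2 fun m => (φ (t + s) m - φ t m) / (s : ℂ) - v m := by
    simp only [memL2_iff_memℓp] at hφ hv ⊢
    convert (((hφ (t + s)).sub (hφ t)).const_smul (s : ℂ)⁻¹).sub hv using 1
    funext m
    simp [div_eq_inv_mul]
  rw [Function.comp_apply, Real.le_sqrt (norm_nonneg _) (sNormSq_nonneg _), Complex.real_smul,
    Complex.ofReal_inv, ← div_eq_inv_mul]
  exact hquot.norm_sq_le_sNormSq n

def cutoff (M : ℝ) : ℕ := ⌈M⌉₊ + 1

theorem lt_cutoff {M : ℝ} {n : ℕ} (h : (n : ℝ) ≤ M) : n < cutoff M :=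
  Nat.lt_succ_of_le (Nat.cast_le.1 (h.trans (Nat.le_ceil M)))

theorem opAM_eq_zero {M : ℝ} {n : ℕ} (ψ : Seq) (hn : ⌈M⌉₊ ≤ n) : opAM M ψ n = 0 :=
  if_neg fun h => (lt_cutoff (n := n + 1) (by push_cast; exact h)).not_ge (Nat.succ_le_succ hn)

theorem opAdM_eq_zero {M : ℝ} {n : ℕ} (ψ : Seq) (hn : cutoff M ≤ n) : opAdM M ψ n = 0 :=
  if_neg fun h => (lt_cutoff h).not_ge hn

def diagOp (w : ℕ → ℝ) (ψ : Seq) : Seq := fun n => (w n : ℂ) * ψ n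

def Aeigen (J μ U : ℝ) (n : ℕ) : ℝ := (J - μ) * n + U / 2 * n * (n - 1)

theorem opALin_eq_diagOp (J μ U : ℝ) : opALin J μ U = diagOp (Aeigen J μ U) := by
  funext ψ n
  simp only [opALin, Acoef, diagOp, Aeigen]
  push_cast
  ring

theorem abs_Aeigen_le (J μ U : ℝ) (n : ℕ) :
    |Aeigen J μ U n| ≤ (|J - μ| + |U|) * (1 + (n : ℝ) ^ 2) := by
  have hn : (0 : ℝ) ≤ n := n.cast_nonneg
  have hsq : (0 : ℝ) ≤ n * (n - 1) := by
    rcases Nat.eq_zero_or_pos n with rfl | h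
    · simp
    · exact mul_nonneg hn (by linarith [(Nat.one_le_cast (α := ℝ)).2 h])
  calc |Aeigen J μ U n| ≤ |J - μ| * n + |U| / 2 * (n * (n - 1)) := by
        rw [Aeigen, mul_assoc (U / 2)]
        refine (abs_add_le _ _).trans ?_
        rw [abs_mul, abs_mul, abs_div, abs_two, Nat.abs_cast, abs_of_nonneg hsq]
    _ ≤ _ := by nlinarith [abs_nonneg (J - μ), abs_nonneg U]

theorem memℓp_diagOp_Aeigen (J μ U : ℝ) {ψ : Seq} (hψ : MemDomN 2 ψ) :
    Memℓp (diagOp (Aeigen J μ U) ψ) 2 := by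
  have hN2 : Memℓp (diagOp (fun n => (n : ℝ) ^ 2) ψ) 2 := by
    refine memL2_iff_memℓp.1 (hψ.2.congr fun n => ?_)
    rw [diagOp, norm_mul, Complex.norm_real, Real.norm_of_nonneg (by positivity),
      show (2 : ℝ) * 2 = (4 : ℕ) by norm_num, Real.rpow_natCast]
    ring
  set C := |J - μ| + |U|
  have hψ2 := memL2_iff_memℓp.1 hψ.1
  refine ((hψ2.norm.const_mul C).add (hN2.norm.const_mul C)).mono fun n => ?_
  have hA := abs_Aeigen_le J μ U n
  simp only [Pi.add_apply, diagOp, norm_mul, Complex.norm_real, Real.norm_eq_abs,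
    abs_of_nonneg (sq_nonneg (n : ℝ))]
  nlinarith [norm_nonneg (ψ n)]

theorem memL2_hTrunc (J μ U M : ℝ) (φ : Seq) {ψ : Seq} (hψ : MemDomN 2 ψ) :
    MemL2 (hTrunc J μ U M φ ψ) := by
  set α := alphaM M φ
  have hsplit : hTrunc J μ U M φ ψ = diagOp (Aeigen J μ U) ψ
      + (fun n => -(J : ℂ) * (α * opAdM M ψ n + conj α * opAM M ψ n))
      + fun n => ((J : ℂ) * (‖α‖ : ℂ) ^ 2) * ψ n := by
    funext n
    simp only [hTrunc, opALin_eq_diagOp, Pi.add_apply]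
    ring
  have hfin : Memℓp (fun n => -(J : ℂ) * (α * opAdM M ψ n + conj α * opAM M ψ n)) 2 :=
    memℓp_of_eq_zero_of_le (cutoff M) fun n hn => by
      rw [opAdM_eq_zero ψ hn, opAM_eq_zero ψ (Nat.le_of_succ_le hn)]; ring
  rw [memL2_iff_memℓp, hsplit]
  exact ((memℓp_diagOp_Aeigen J μ U hψ).add hfin).add
    ((memL2_iff_memℓp.1 hψ.1).const_mul _)

theorem diagOp_diagOp (v w : ℕ → ℝ) (ψ : Seq) :
    diagOp v (diagOp w ψ) = diagOp (fun n => v n * w n) ψ := by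
  funext n
  simp only [diagOp, Complex.ofReal_mul]
  ring

def blockInner (K : ℕ) (u v : Seq) : ℂ := ∑ n ∈ range K, conj (u n) * v n

section blockInner

variable {K : ℕ}

theorem conj_blockInner (u v : Seq) : conj (blockInner K u v) = blockInner K v u := by
  simp only [blockInner, map_sum, map_mul, Complex.conj_conj, mul_comm]

theorem blockInner_smul_left (c : ℂ) (u v : Seq) :
    blockInner K (fun n => c * u n) v = conj c * blockInner K u v := by
  simp only [blockInner, mul_sum, map_mul, mul_assoc]

theorem blockInner_diagOp_self (w : ℕ → ℝ) (u : Seq) :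
    blockInner K u (diagOp w u) = ((∑ n ∈ range K, w n * ‖u n‖ ^ 2 : ℝ) : ℂ) := by
  push_cast
  refine sum_congr rfl fun n _ => ?_
  rw [diagOp, ← Complex.conj_mul']
  ring

theorem conj_blockInner_diagOp_self (w : ℕ → ℝ) (u : Seq) :
    conj (blockInner K u (diagOp w u)) = blockInner K u (diagOp w u) := by
  rw [blockInner_diagOp_self, Complex.conj_ofReal]

theorem blockInner_self (u : Seq) :
    blockInner K u u = ((∑ n ∈ range K, ‖u n‖ ^ 2 : ℝ) : ℂ) := by
  push_cast
  exact sum_congr rfl fun n _ => Complex.conj_mul' (u n)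

theorem blockInner_diagOp_left (w : ℕ → ℝ) (u v : Seq) :
    blockInner K (diagOp w u) v = blockInner K u (diagOp w v) :=
  sum_congr rfl fun n _ => by simp only [diagOp, map_mul, Complex.conj_ofReal]; ring

theorem norm_blockInner_sq_le (u v : Seq) :
    ‖blockInner K u v‖ ^ 2 ≤ (∑ n ∈ range K, ‖u n‖ ^ 2) * ∑ n ∈ range K, ‖v n‖ ^ 2 := by
  have h : ‖blockInner K u v‖ ≤ ∑ n ∈ range K, ‖u n‖ * ‖v n‖ :=
    (norm_sum_le _ _).trans_eq (sum_congr rfl fun n _ => by rw [norm_mul, Complex.norm_conj])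
  exact (pow_le_pow_left₀ (norm_nonneg _) h 2).trans (sum_mul_sq_le_sq_mul_sq _ _ _)

theorem hasDerivAt_blockInner {u v : ℝ → Seq} {u' v' : Seq} {t : ℝ}
    (hu : ∀ n, HasDerivAt (fun s => u s n) (u' n) t)
    (hv : ∀ n, HasDerivAt (fun s => v s n) (v' n) t) :
    HasDerivAt (fun s => blockInner K (u s) (v s))
      (blockInner K u' (v t) + blockInner K (u t) v') t := by
  rw [blockInner, blockInner, ← sum_add_distrib]
  exact HasDerivAt.fun_sum fun n _ => (hu n).star.mul (hv n)

end blockInner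

section truncation

variable {M : ℝ} {K : ℕ}

theorem blockInner_opAdM_left (hK : cutoff M ≤ K) (u v : Seq) :
    blockInner K (opAdM M u) v = blockInner K u (opAM M v) := by
  obtain ⟨K, rfl⟩ : ∃ K', K = K' + 1 := ⟨K - 1, by unfold cutoff at hK; omega⟩
  have hlast : opAM M v K = 0 := opAM_eq_zero v (Nat.le_of_succ_le_succ hK)
  rw [blockInner, blockInner, sum_range_succ', sum_range_succ, hlast]
  simp only [opAdM, opAd, opAM, CharP.cast_eq_zero, Real.sqrt_zero, Complex.ofReal_zero,
    zero_mul, ite_self, map_zero, mul_zero, add_zero, Nat.cast_add, Nat.cast_one,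
    Nat.add_sub_cancel]
  refine sum_congr rfl fun n _ => ?_
  split_ifs <;> simp only [map_mul, Complex.conj_ofReal, map_zero, zero_mul, mul_zero]
  ring

theorem blockInner_opAdM_right (hK : cutoff M ≤ K) (u v : Seq) :
    blockInner K u (opAdM M v) = blockInner K (opAM M u) v := by
  rw [← conj_blockInner, blockInner_opAdM_left hK, conj_blockInner]

theorem alphaM_eq_blockInner (hK : cutoff M ≤ K) (φ : Seq) :
    alphaM M φ = blockInner K φ (opAM M φ) :=
  tsum_eq_sum fun n hn => by
    rw [opAM_eq_zero φ (by simp at hn; unfold cutoff at hK; omega), mul_zero]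

theorem blockInner_opAM_diagOp {w : ℕ → ℝ} {d : ℝ} (hw : ∀ n, w (n + 1) = w n + d)
    (u v : Seq) :
    blockInner K u (opAM M (diagOp w v)) =
      blockInner K (diagOp w u) (opAM M v) + d * blockInner K u (opAM M v) := by
  simp only [blockInner, mul_sum, ← sum_add_distrib]
  refine sum_congr rfl fun n _ => ?_
  simp only [opAM, diagOp, hw, map_mul, Complex.conj_ofReal]
  split_ifs
  · push_cast; ring
  · ring

theorem sum_norm_opAM_sq_le {φ : Seq} (hφ : MemNmom 1 φ) :
    ∑ n ∈ range K, ‖opAM M φ n‖ ^ 2 ≤ Nmom 1 φ := by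
  have hterm : ∀ n, ‖opAM M φ n‖ ^ 2 ≤ ((n + 1 : ℕ) : ℝ) ^ (1 : ℝ) * ‖φ (n + 1)‖ ^ 2 := by
    intro n
    rw [opAM]
    split_ifs
    · rw [norm_mul, mul_pow, Complex.norm_real, Real.norm_of_nonneg (Real.sqrt_nonneg _),
        Real.sq_sqrt (by positivity), Real.rpow_one]
      push_cast; rfl
    · simp only [norm_zero, ne_eq, OfNat.ofNat_ne_zero, not_false_eq_true, zero_pow]
      positivity
  calc ∑ n ∈ range K, ‖opAM M φ n‖ ^ 2
      ≤ ∑ n ∈ range (K + 1), (n : ℝ) ^ (1 : ℝ) * ‖φ n‖ ^ 2 := by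
        rw [sum_range_succ']
        simpa using sum_le_sum fun n _ => hterm n
    _ ≤ Nmom 1 φ := hφ.sum_le_tsum _ fun n _ => by positivity

end truncation

section generator

variable {J μ U M : ℝ} {K : ℕ}

theorem blockInner_hTrunc (φ u v : Seq) :
    blockInner K u (hTrunc J μ U M φ v) =
      blockInner K u (diagOp (Aeigen J μ U) v) - J * (alphaM M φ * blockInner K u (opAdM M v)
        + conj (alphaM M φ) * blockInner K u (opAM M v) - ‖alphaM M φ‖ ^ 2 * blockInner K u v) := by
  simp only [blockInner, mul_sum, ← sum_sub_distrib, ← sum_add_distrib]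
  refine sum_congr rfl fun n _ => ?_
  simp only [hTrunc, opALin_eq_diagOp]
  ring

theorem blockInner_hTrunc_left (hK : cutoff M ≤ K) (φ u v : Seq) :
    blockInner K (hTrunc J μ U M φ u) v = blockInner K u (hTrunc J μ U M φ v) := by
  rw [← conj_blockInner, blockInner_hTrunc, blockInner_hTrunc]
  simp only [map_sub, map_mul, map_add, map_pow, Complex.conj_ofReal, Complex.conj_conj,
    conj_blockInner, blockInner_diagOp_left, blockInner_opAdM_right hK]
  ring

theorem conj_blockInner_hTrunc_self (hK : cutoff M ≤ K) (φ u : Seq) :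
    conj (blockInner K u (hTrunc J μ U M φ u)) = blockInner K u (hTrunc J μ U M φ u) := by
  rw [conj_blockInner, blockInner_hTrunc_left hK]

theorem blockInner_hTrunc_self (hK : cutoff M ≤ K) (φ : Seq) :
    blockInner K φ (hTrunc J μ U M φ φ) =
      blockInner K φ (diagOp (Aeigen J μ U) φ) - J * ‖alphaM M φ‖ ^ 2 * (2 - blockInner K φ φ) := by
  have hconj : blockInner K (opAM M φ) φ = conj (alphaM M φ) := by
    rw [alphaM_eq_blockInner hK, conj_blockInner]
  rw [blockInner_hTrunc, blockInner_opAdM_right hK, hconj, ← alphaM_eq_blockInner hK,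
    ← Complex.mul_conj']
  ring

theorem conj_blockInner_hTrunc_diagOp (hK : cutoff M ≤ K) {w : ℕ → ℝ} {d : ℝ}
    (hw : ∀ n, w (n + 1) = w n + d) (φ : Seq) :
    conj (blockInner K φ (hTrunc J μ U M φ (diagOp w φ))) =
      blockInner K φ (hTrunc J μ U M φ (diagOp w φ)) := by
  have hadj : blockInner K φ (opAdM M (diagOp w φ)) =
      conj (blockInner K (diagOp w φ) (opAM M φ)) := by
    rw [blockInner_opAdM_right hK, conj_blockInner]
  rw [blockInner_hTrunc, hadj, blockInner_opAM_diagOp hw, ← alphaM_eq_blockInner hK,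
    diagOp_diagOp]
  simp only [map_sub, map_mul, map_add, map_pow, Complex.conj_ofReal, Complex.conj_conj,
    conj_blockInner_diagOp_self]
  ring

end generator

def blockEnergy (J μ U M : ℝ) (K : ℕ) (ψ : Seq) : ℂ :=
  blockInner K ψ (diagOp (Aeigen J μ U) ψ) - J * (‖alphaM M ψ‖ : ℂ) ^ 2

theorem blockInner_neg_I_mul {K : ℕ} (u v : Seq) :
    blockInner K (fun n => -I * u n) v = I * blockInner K u v := by
  rw [blockInner_smul_left, map_neg, Complex.conj_I, neg_neg]

theorem I_mul_add_conj_eq_zero {r : ℂ} (hr : conj r = r) : I * r + conj (I * r) = 0 := by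
  rw [map_mul, Complex.conj_I, hr]
  ring

theorem eq_of_hasDerivAt_zero {f : ℝ → ℂ} (hf : ∀ s, HasDerivAt f 0 s) (t : ℝ) : f t = f 0 :=
  is_const_of_deriv_eq_zero (fun s => (hf s).differentiableAt) (fun s => (hf s).deriv) t 0

theorem hasDerivAt_opAM_apply {M : ℝ} {u : ℝ → Seq} {u' : Seq} {t : ℝ}
    (hu : ∀ n, HasDerivAt (fun s => u s n) (u' n) t) (n : ℕ) :
    HasDerivAt (fun s => opAM M (u s) n) (opAM M u' n) t := by
  unfold opAM
  split_ifs
  · exact (hu (n + 1)).const_mul _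
  · exact hasDerivAt_const _ _

section dynamics

variable {J μ U M : ℝ} {φ : ℝ → Seq} {K : ℕ}

theorem IsTruncSolution.hasDerivAt_apply (hsol : IsTruncSolution J μ U M φ) (t : ℝ) (n : ℕ) :
    HasDerivAt (fun s => φ s n) (-I * hTrunc J μ U M (φ t) (φ t) n) t :=
  (hsol.2 t).hasDerivAt_apply (fun s => (hsol.1 s).1)
    (memL2_iff_memℓp.2 ((memL2_iff_memℓp.1 (memL2_hTrunc J μ U M _ (hsol.1 t))).const_mul _)) n

theorem IsTruncSolution.sum_mul_norm_sq_eq (hsol : IsTruncSolution J μ U M φ)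
    (hK : cutoff M ≤ K) {w : ℕ → ℝ} {d : ℝ} (hw : ∀ n, w (n + 1) = w n + d) (t : ℝ) :
    ∑ n ∈ range K, w n * ‖φ t n‖ ^ 2 = ∑ n ∈ range K, w n * ‖φ 0 n‖ ^ 2 := by
  suffices h : ∀ s, HasDerivAt (fun s => blockInner K (φ s) (diagOp w (φ s))) 0 s by
    simpa only [blockInner_diagOp_self, Complex.ofReal_inj] using eq_of_hasDerivAt_zero h t
  intro s
  set ψ' : Seq := fun n => -I * hTrunc J μ U M (φ s) (φ s) n
  have hderiv := hasDerivAt_blockInner (K := K) (hsol.hasDerivAt_apply s)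
    fun n => (hsol.hasDerivAt_apply s n).const_mul (w n : ℂ)
  have hsymm : blockInner K (φ s) (diagOp w ψ') = conj (blockInner K ψ' (diagOp w (φ s))) := by
    rw [← blockInner_diagOp_left, conj_blockInner]
  have hrot : blockInner K ψ' (diagOp w (φ s)) =
      I * blockInner K (φ s) (hTrunc J μ U M (φ s) (diagOp w (φ s))) := by
    rw [blockInner_neg_I_mul, blockInner_hTrunc_left hK]
  refine hderiv.congr_deriv ?_
  change blockInner K ψ' (diagOp w (φ s)) + blockInner K (φ s) (diagOp w ψ') = 0
  rw [hsymm, hrot, I_mul_add_conj_eq_zero (conj_blockInner_hTrunc_diagOp hK hw (φ s))]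

theorem IsTruncSolution.hasDerivAt_alphaM (hsol : IsTruncSolution J μ U M φ)
    (hK : cutoff M ≤ K) (s : ℝ) :
    HasDerivAt (fun s => alphaM M (φ s))
      (blockInner K (fun n => -I * hTrunc J μ U M (φ s) (φ s) n) (opAM M (φ s))
        + conj (blockInner K (fun n => -I * hTrunc J μ U M (φ s) (φ s) n) (opAdM M (φ s)))) s := by
  simp_rw [alphaM_eq_blockInner hK]
  rw [conj_blockInner, blockInner_opAdM_left hK]
  exact hasDerivAt_blockInner (hsol.hasDerivAt_apply s)
    (hasDerivAt_opAM_apply (hsol.hasDerivAt_apply s))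

theorem IsTruncSolution.blockEnergy_eq (hsol : IsTruncSolution J μ U M φ) (hK : cutoff M ≤ K)
    (t : ℝ) : blockEnergy J μ U M K (φ t) = blockEnergy J μ U M K (φ 0) := by
  refine eq_of_hasDerivAt_zero (f := fun s => blockEnergy J μ U M K (φ s)) (fun s => ?_) t
  set ψ := φ s
  set ψ' : Seq := fun n => -I * hTrunc J μ U M ψ ψ n
  set α := alphaM M ψ
  have hα := hsol.hasDerivAt_alphaM hK s
  have hnormsq : HasDerivAt (fun s => (‖alphaM M (φ s)‖ : ℂ) ^ 2)
      (conj (blockInner K ψ' (opAM M ψ) + conj (blockInner K ψ' (opAdM M ψ))) * α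
        + conj α * (blockInner K ψ' (opAM M ψ) + conj (blockInner K ψ' (opAdM M ψ)))) s := by
    simp only [← Complex.conj_mul']
    exact hα.star.mul hα
  have hA := hasDerivAt_blockInner (K := K) (hsol.hasDerivAt_apply s)
    fun n => (hsol.hasDerivAt_apply s n).const_mul (Aeigen J μ U n : ℂ)
  have hAsymm : blockInner K ψ (diagOp (Aeigen J μ U) ψ') =
      conj (blockInner K ψ' (diagOp (Aeigen J μ U) ψ)) := by
    rw [← blockInner_diagOp_left, conj_blockInner]
  have hH : blockInner K ψ' (hTrunc J μ U M ψ ψ)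
      + conj (blockInner K ψ' (hTrunc J μ U M ψ ψ)) = 0 := by
    rw [blockInner_neg_I_mul]
    exact I_mul_add_conj_eq_zero (by rw [blockInner_self, Complex.conj_ofReal])
  have hT : blockInner K ψ' ψ + conj (blockInner K ψ' ψ) = 0 := by
    rw [blockInner_neg_I_mul, blockInner_hTrunc_left hK]
    exact I_mul_add_conj_eq_zero (conj_blockInner_hTrunc_self hK ψ ψ)
  rw [blockInner_hTrunc] at hH
  simp only [map_sub, map_mul, map_add, map_pow, Complex.conj_ofReal, Complex.conj_conj] at hH
  show HasDerivAt (fun s => blockInner K (φ s) (diagOp (Aeigen J μ U) (φ s))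
    - J * (‖alphaM M (φ s)‖ : ℂ) ^ 2) 0 s
  refine (hA.sub (hnormsq.const_mul (J : ℂ))).congr_deriv ?_
  change blockInner K ψ' (diagOp (Aeigen J μ U) ψ)
    + blockInner K ψ (diagOp (Aeigen J μ U) ψ') - _ = 0
  rw [hAsymm]
  simp only [map_add, Complex.conj_conj]
  linear_combination hH - J * (‖α‖ : ℂ) ^ 2 * hT

end dynamics

theorem sInner_self (ψ : Seq) : sInner ψ ψ = sNormSq ψ := by
  rw [sInner, sNormSq, Complex.ofReal_tsum]
  exact tsum_congr fun n => by push_cast; exact Complex.conj_mul' (ψ n)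

theorem tendsto_blockInner {u v : Seq} (hu : MemL2 u) (hv : MemL2 v) :
    Tendsto (fun K => blockInner K u v) atTop (𝓝 (sInner u v)) := by
  refine (Summable.hasSum ?_).tendsto_sum_nat
  refine (hu.add hv).of_norm_bounded fun n => ?_
  rw [norm_mul, Complex.norm_conj]
  nlinarith [sq_nonneg (‖u n‖ - ‖v n‖), norm_nonneg (u n), norm_nonneg (v n)]

theorem tendsto_blockEnergy (J μ U M : ℝ) {ψ : Seq} (hψ : MemDomN 2 ψ) (hnorm : sNormSq ψ = 1) :
    Tendsto (fun K => blockEnergy J μ U M K ψ) atTop (𝓝 (sInner ψ (hTrunc J μ U M ψ ψ))) := by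
  set c : ℂ := J * (‖alphaM M ψ‖ : ℂ) ^ 2
  have h := (tendsto_blockInner hψ.1 (memL2_hTrunc J μ U M ψ hψ)).add
    ((tendsto_const_nhds (x := 1)).sub (tendsto_blockInner hψ.1 hψ.1) |>.const_mul c)
  rw [sInner_self, hnorm, Complex.ofReal_one, sub_self, mul_zero, add_zero] at h
  refine h.congr' ((eventually_ge_atTop (cutoff M)).mono fun K hK => ?_)
  simp only [blockInner_hTrunc_self hK, blockEnergy, c]
  ring

theorem norm_alphaM_sq_le (M : ℝ) {ψ : Seq} (hψ : MemL2 ψ) (hN : MemNmom 1 ψ) :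
    ‖alphaM M ψ‖ ^ 2 ≤ sNormSq ψ * Nmom 1 ψ := by
  rw [alphaM_eq_blockInner le_rfl]
  exact (norm_blockInner_sq_le _ _).trans (mul_le_mul (hψ.sum_le_tsum _ fun _ _ => sq_nonneg _)
    (sum_norm_opAM_sq_le hN) (sum_nonneg fun _ _ => sq_nonneg _) (sNormSq_nonneg ψ))

theorem truncated_conservation_laws_general
    (J μ U M : ℝ) (φM : ℝ → Seq)
    (hsol : IsTruncSolution J μ U M φM) (hnorm : sNormSq (φM 0) = 1) :
    ∀ t : ℝ,
      sNormSq (φM t) = 1 ∧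
      Nmom 1 (φM t) = Nmom 1 (φM 0) ∧
      sInner (φM t) (hTrunc J μ U M (φM t) (φM t)) =
        sInner (φM 0) (hTrunc J μ U M (φM 0) (φM 0)) ∧
      ‖alphaM M (φM t)‖ ≤ Real.sqrt (Nmom 1 (φM 0)) := by
  intro t
  have hK : ∀ᶠ K in atTop, cutoff M ≤ K := eventually_ge_atTop _
  have hN : ∀ s, MemNmom 1 (φM s) := fun s =>
    memNmom_of_le (by norm_num) (hsol.1 s).1 (hsol.1 s).2
  have hnorm_t : sNormSq (φM t) = 1 := hnorm ▸
    tsum_eq_tsum_of_sum_range_eventuallyEq (hsol.1 t).1 (hsol.1 0).1 (hK.mono fun K hK => by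
      simpa using hsol.sum_mul_norm_sq_eq hK (w := fun _ => 1) (d := 0) (by simp) t)
  have hnum : Nmom 1 (φM t) = Nmom 1 (φM 0) :=
    tsum_eq_tsum_of_sum_range_eventuallyEq (hN t) (hN 0) (hK.mono fun K hK => by
      simpa using hsol.sum_mul_norm_sq_eq hK (w := fun n => n) (d := 1) (by simp) t)
  refine ⟨hnorm_t, hnum, ?_, ?_⟩
  · exact tendsto_nhds_unique_of_eventuallyEq (tendsto_blockEnergy J μ U M (hsol.1 t) hnorm_t)
      (tendsto_blockEnergy J μ U M (hsol.1 0) hnorm) (hK.mono fun K hK => hsol.blockEnergy_eq hK t)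
  · rw [← hnum]
    refine Real.le_sqrt_of_sq_le ?_
    simpa [hnorm_t] using norm_alphaM_sq_le M (hsol.1 t).1 (hN t)

/-- Conservation laws for the truncated mean-field dynamics:
(i) norm conservation, (ii) particle number conservation, (iii) energy conservation for
`h_M^{α_M} = A - J(α_M a*_M + conj α_M a_M - |α_M|²)`, (iv) `|α_M(t)| ≤ ‖𝒩^{1/2}φ₀‖`. -/
theorem truncated_conservation_laws
    (J μ U M : ℝ) (hM : 0 < M) (φM : ℝ → Seq)
    (hsol : IsTruncSolution J μ U M φM) (hnorm : sNormSq (φM 0) = 1) :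
    ∀ t : ℝ,
      sNormSq (φM t) = 1 ∧
      Nmom 1 (φM t) = Nmom 1 (φM 0) ∧
      sInner (φM t) (hTrunc J μ U M (φM t) (φM t)) =
        sInner (φM 0) (hTrunc J μ U M (φM 0) (φM 0)) ∧
      ‖alphaM M (φM t)‖ ≤ Real.sqrt (Nmom 1 (φM 0)) :=
  truncated_conservation_laws_general J μ U M φM hsol hnorm

end

end BoseHubbard
end

section
/- Let k ∈ ℕ, let γ and p be trace-class operators on ℓ²(ℂ) with 0 ≤ γ ≤ 1, p a rank-one orthogonal projection, and assume p𝒩^k and γ𝒩^k are trace class. Set q := 1 − p. Then Tr(γ q 𝒩^k q) ≤ 2 Tr(γ 𝒩^k) + 2 Tr(p 𝒩^k). -/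
namespace BoseHubbard

noncomputable section

open scoped BigOperators ComplexConjugate
open Complex Filter

/-! With `G = 𝒩^k ≥ 0`, the identity `(1 - p) G (1 - p) + (1 + p) G (1 + p) = 2 G + 2 p G p` gives
`Tr(γ q G q) ≤ 2 Tr(γ G) + 2 Tr(γ p G p)`, because
`Tr(γ (1 + p) G (1 + p)) = ∑ⱼ jᵏ ⟨(1 + p) eⱼ, γ (1 + p) eⱼ⟩ ≥ 0`; and
`Tr(γ p G p) = ⟨φ, G φ⟩ ⟨φ, γ φ⟩ ≤ ⟨φ, G φ⟩` since `γ ≤ 1`.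
Every series involved converges absolutely: a positive kernel satisfies `|γₘₙ|² ≤ γₘₘ γₙₙ`, so
`γ` is dominated entrywise by the rank-one kernel `rₘ rₙ` with `r = √(diag γ) ∈ ℓ²`. -/

section Kernels

variable {κ : ℕ → ℕ → ℂ} {r : ℕ → ℝ}

theorem kerPosSemidef.re_sum_nonneg (hκ : kerPosSemidef κ) (w : Seq)
    (F : Finset ℕ) : 0 ≤ (∑ m ∈ F, ∑ n ∈ F, conj (w m) * κ m n * w n).re := by
  classical
  let v : ℕ →₀ ℂ := Finsupp.onFinset F (fun i => if i ∈ F then w i else 0)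
    (fun i hi => by by_contra h; simp [h] at hi)
  have hsupp : v.support ⊆ F := Finsupp.support_onFinset_subset
  have hvF : ∀ i ∈ F, v i = w i := fun i hi => by simp [v, hi]
  have hv0 : ∀ i ∉ v.support, v i = 0 := fun i => Finsupp.notMem_support_iff.mp
  have hsum : ∑ m ∈ v.support, ∑ n ∈ v.support, conj (v m) * κ m n * v n
      = ∑ m ∈ F, ∑ n ∈ F, conj (w m) * κ m n * w n := by
    rw [Finset.sum_subset hsupp fun m _ hm => by simp [hv0 m hm]]
    refine Finset.sum_congr rfl fun m hm => ?_
    rw [Finset.sum_subset hsupp fun n _ hn => by simp [hv0 n hn]]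
    exact Finset.sum_congr rfl fun n hn => by rw [hvF m hm, hvF n hn]
  exact hsum ▸ hκ.2 v

theorem kerPosSemidef.re_diag_nonneg (hκ : kerPosSemidef κ) (m : ℕ) :
    0 ≤ (κ m m).re := by
  simpa using hκ.re_sum_nonneg (fun _ => 1) {m}

theorem kerPosSemidef.ofReal_re_diag (hκ : kerPosSemidef κ) (m : ℕ) :
    ((κ m m).re : ℂ) = κ m m :=
  Complex.conj_eq_iff_re.mp (hκ.1 m m).symm

theorem kerPosSemidef.norm_sq_le (hκ : kerPosSemidef κ) (m n : ℕ) :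
    ‖κ m n‖ ^ 2 ≤ (κ m m).re * (κ n n).re := by
  rcases eq_or_ne m n with rfl | hmn
  · rw [← hκ.ofReal_re_diag, Complex.norm_real, Real.norm_of_nonneg (hκ.re_diag_nonneg m), sq,
      Complex.ofReal_re]
  -- the form on `κ m n • e_m + t • e_n` is a nonnegative quadratic polynomial in `t`
  have hquad : ∀ t : ℝ, 0 ≤ (κ n n).re * (t * t) + 2 * ‖κ m n‖ ^ 2 * t
      + (κ m m).re * ‖κ m n‖ ^ 2 := by
    intro t
    have h := hκ.re_sum_nonneg (fun i => if i = m then κ m n else (t : ℂ)) {m, n}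
    simp only [Finset.sum_pair hmn, if_neg hmn.symm, if_true, Complex.conj_ofReal] at h
    rw [hκ.1 m n] at h
    have e : conj (κ m n) * κ m m * κ m n + conj (κ m n) * κ m n * t
        + (t * conj (κ m n) * κ m n + t * κ n n * t)
        = κ m m * ((‖κ m n‖ ^ 2 : ℝ) : ℂ) + ((2 * ‖κ m n‖ ^ 2 * t : ℝ) : ℂ)
          + κ n n * ((t * t : ℝ) : ℂ) := by
      push_cast
      linear_combination (κ m m + 2 * t) * Complex.conj_mul' (κ m n)
    rw [e] at h
    simp only [Complex.add_re, Complex.re_mul_ofReal, Complex.ofReal_re] at h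
    linarith
  have hdisc := discrim_le_zero hquad
  rw [discrim] at hdisc
  rcases eq_or_ne (κ m n) 0 with h0 | h0
  · rw [h0, norm_zero]
    simpa using mul_nonneg (hκ.re_diag_nonneg m) (hκ.re_diag_nonneg n)
  · have : 0 < ‖κ m n‖ ^ 2 := by positivity
    nlinarith

theorem kerPosSemidef.norm_le_sqrt_mul_sqrt (hκ : kerPosSemidef κ) (m n : ℕ) :
    ‖κ m n‖ ≤ √(κ m m).re * √(κ n n).re := by
  rw [← Real.sqrt_mul (hκ.re_diag_nonneg m)]
  exact Real.le_sqrt_of_sq_le (hκ.norm_sq_le m n)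

def kerApply (κ : ℕ → ℕ → ℂ) (v : Seq) : Seq := fun m => ∑' n, κ m n * v n

def kerForm (κ : ℕ → ℕ → ℂ) (u v : Seq) : ℂ := ∑' p : ℕ × ℕ, conj (u p.1) * κ p.1 p.2 * v p.2

theorem conj_kerForm (hκ : ∀ m n, κ n m = conj (κ m n)) (u v : Seq) :
    conj (kerForm κ u v) = kerForm κ v u := by
  rw [kerForm, kerForm, Complex.conj_tsum, ← (Equiv.prodComm ℕ ℕ).tsum_eq]
  refine tsum_congr fun p => ?_
  simp only [Equiv.prodComm_apply, Prod.fst_swap, Prod.snd_swap, map_mul, Complex.conj_conj,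
    ← hκ]
  ring

theorem kerForm_smul_left (κ : ℕ → ℕ → ℂ) (c : ℂ) (u v : Seq) :
    kerForm κ (c • u) v = conj c * kerForm κ u v := by
  rw [kerForm, kerForm, ← tsum_mul_left]
  refine tsum_congr fun p => ?_
  simp only [Pi.smul_apply, smul_eq_mul, map_mul]
  ring

theorem kerForm_smul_right (κ : ℕ → ℕ → ℂ) (c : ℂ) (u v : Seq) :
    kerForm κ u (c • v) = c * kerForm κ u v := by
  rw [kerForm, kerForm, ← tsum_mul_left]
  refine tsum_congr fun p => ?_
  simp only [Pi.smul_apply, smul_eq_mul]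
  ring

theorem kerPosSemidef.re_kerForm_self_nonneg (hκ : kerPosSemidef κ) {w : Seq}
    (hw : Summable fun p : ℕ × ℕ => conj (w p.1) * κ p.1 p.2 * w p.2) :
    0 ≤ (kerForm κ w w).re := by
  have hsquares := hw.hasSum.comp (tendsto_finsetProd_atTop.comp tendsto_atTop_diagonal)
  refine ge_of_tendsto ((Complex.continuous_re.tendsto _).comp hsquares)
    (Eventually.of_forall fun F => ?_)
  simpa [Finset.sum_product] using hκ.re_sum_nonneg w F

theorem summable_kerApply_summand (hκr : ∀ m n, ‖κ m n‖ ≤ r m * r n) {v : Seq}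
    (hv : Summable fun n => ‖v n‖ * r n) (m : ℕ) : Summable fun n => κ m n * v n := by
  refine Summable.of_norm_bounded (hv.mul_left (r m)) fun n => ?_
  rw [norm_mul]
  nlinarith [hκr m n, norm_nonneg (v n)]

theorem summable_kerForm (hr : 0 ≤ r) (hκr : ∀ m n, ‖κ m n‖ ≤ r m * r n) {u v : Seq}
    (hu : Summable fun n => ‖u n‖ * r n) (hv : Summable fun n => ‖v n‖ * r n) :
    Summable fun p : ℕ × ℕ => conj (u p.1) * κ p.1 p.2 * v p.2 := by
  refine Summable.of_norm_bounded
    (hu.mul_of_nonneg hv (fun n => mul_nonneg (norm_nonneg _) (hr n))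
      fun n => mul_nonneg (norm_nonneg _) (hr n)) fun p => ?_
  rw [norm_mul, norm_mul, Complex.norm_conj]
  calc ‖u p.1‖ * ‖κ p.1 p.2‖ * ‖v p.2‖ ≤ ‖u p.1‖ * (r p.1 * r p.2) * ‖v p.2‖ := by
        gcongr; exact hκr p.1 p.2
    _ = ‖u p.1‖ * r p.1 * (‖v p.2‖ * r p.2) := by ring

theorem hasSum_kerApply (hr : 0 ≤ r) (hκr : ∀ m n, ‖κ m n‖ ≤ r m * r n) {u v : Seq}
    (hu : Summable fun n => ‖u n‖ * r n) (hv : Summable fun n => ‖v n‖ * r n) :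
    HasSum (fun m => conj (u m) * kerApply κ v m) (kerForm κ u v) :=
  (summable_kerForm hr hκr hu hv).hasSum.prod_fiberwise fun m => by
    simpa only [mul_assoc, kerApply] using
      (summable_kerApply_summand hκr hv m).hasSum.mul_left (conj (u m))

theorem kerForm_add_left (hr : 0 ≤ r) (hκr : ∀ m n, ‖κ m n‖ ≤ r m * r n) {u v w : Seq}
    (hu : Summable fun n => ‖u n‖ * r n) (hv : Summable fun n => ‖v n‖ * r n)
    (hw : Summable fun n => ‖w n‖ * r n) :
    kerForm κ (u + v) w = kerForm κ u w + kerForm κ v w := by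
  rw [kerForm, kerForm, kerForm,
    ← (summable_kerForm hr hκr hu hw).tsum_add (summable_kerForm hr hκr hv hw)]
  refine tsum_congr fun p => ?_
  simp only [Pi.add_apply, map_add]
  ring

theorem kerForm_add_right (hr : 0 ≤ r) (hκr : ∀ m n, ‖κ m n‖ ≤ r m * r n) {u v w : Seq}
    (hu : Summable fun n => ‖u n‖ * r n) (hv : Summable fun n => ‖v n‖ * r n)
    (hw : Summable fun n => ‖w n‖ * r n) :
    kerForm κ u (v + w) = kerForm κ u v + kerForm κ u w := by
  rw [kerForm, kerForm, kerForm,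
    ← (summable_kerForm hr hκr hu hv).tsum_add (summable_kerForm hr hκr hu hw)]
  refine tsum_congr fun p => ?_
  simp only [Pi.add_apply]
  ring

theorem summable_norm_single_mul (j : ℕ) :
    Summable fun n => ‖(Pi.single j 1 : Seq) n‖ * r n :=
  summable_of_ne_finset_zero (s := {j}) fun n hn => by simp_all

theorem kerForm_single_left (hr : 0 ≤ r) (hκr : ∀ m n, ‖κ m n‖ ≤ r m * r n) {v : Seq}
    (hv : Summable fun n => ‖v n‖ * r n) (j : ℕ) :
    kerForm κ (Pi.single j 1) v = kerApply κ v j := by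
  simpa using (hasSum_kerApply hr hκr (summable_norm_single_mul j) hv).unique
    (hasSum_single j fun m hm => by simp [hm])

theorem kerPosSemidef.re_add_two_re_mul_kerApply_add_nonneg (hκ : kerPosSemidef κ)
    (hr : 0 ≤ r) (hκr : ∀ m n, ‖κ m n‖ ≤ r m * r n) {φ : Seq}
    (hφ : Summable fun n => ‖φ n‖ * r n) (j : ℕ) (c : ℂ) :
    0 ≤ (κ j j).re + 2 * (c * kerApply κ φ j).re + ‖c‖ ^ 2 * (kerForm κ φ φ).re := by
  set e : Seq := Pi.single j 1
  have he : Summable fun n => ‖e n‖ * r n := summable_norm_single_mul j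
  have hcφ : Summable fun n => ‖(c • φ) n‖ * r n := by
    simpa [norm_smul, mul_assoc] using hφ.mul_left ‖c‖
  have hw : Summable fun n => ‖(e + c • φ) n‖ * r n :=
    (he.add hcφ).of_nonneg_of_le (fun n => mul_nonneg (norm_nonneg _) (hr n)) fun n => by
      rw [← add_mul]; exact mul_le_mul_of_nonneg_right (norm_add_le _ _) (hr n)
  have hexpand : kerForm κ (e + c • φ) (e + c • φ)
      = κ j j + c * kerApply κ φ j + conj (c * kerApply κ φ j)
        + ((‖c‖ ^ 2 : ℝ) : ℂ) * kerForm κ φ φ := by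
    have hee : kerApply κ e j = κ j j := by
      simp [e, kerApply, Pi.single_apply]
    rw [kerForm_add_left hr hκr he hcφ hw, kerForm_add_right hr hκr he he hcφ,
      kerForm_add_right hr hκr hcφ he hcφ, ← conj_kerForm hκ.1 e (c • φ),
      kerForm_single_left hr hκr he, hee, kerForm_smul_right, kerForm_single_left hr hκr hφ,
      kerForm_smul_left, kerForm_smul_right, ← mul_assoc, Complex.conj_mul', Complex.ofReal_pow]
    ring
  have := hκ.re_kerForm_self_nonneg (summable_kerForm hr hκr hw hw)
  rw [hexpand, Complex.add_re, Complex.add_re, Complex.add_re, Complex.re_ofReal_mul,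
    Complex.conj_re] at this
  linarith

end Kernels

theorem hasSum_kerForm_idKer {φ : Seq} (hφ : MemL2 φ) :
    HasSum (fun p : ℕ × ℕ => conj (φ p.1) * idKer p.1 p.2 * φ p.2) (sNormSq φ) := by
  have hdiag : Function.Injective fun n : ℕ => (n, n) := fun a b h => congrArg Prod.fst h
  rw [← hdiag.hasSum_iff fun p hp => by
    have : p.1 ≠ p.2 := fun h => hp ⟨p.1, Prod.ext rfl h⟩
    simp [idKer, this]]
  convert Complex.hasSum_ofReal.mpr hφ.hasSum using 1
  · funext n
    simp [idKer, Complex.conj_mul']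
  · rfl

theorem re_kerForm_le_sNormSq {γ : ℕ → ℕ → ℂ}
    (hγ : kerPosSemidef fun m n => idKer m n - γ m n) {φ : Seq} (hφ : MemL2 φ)
    (hγφ : Summable fun p : ℕ × ℕ => conj (φ p.1) * γ p.1 p.2 * φ p.2) :
    (kerForm γ φ φ).re ≤ sNormSq φ := by
  have hsub := (hasSum_kerForm_idKer hφ).sub hγφ.hasSum
  simp only [← mul_sub, ← sub_mul] at hsub
  have hform : kerForm (fun m n => idKer m n - γ m n) φ φ = sNormSq φ - kerForm γ φ φ :=
    hsub.tsum_eq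
  have := hγ.re_kerForm_self_nonneg hsub.summable
  rw [hform, Complex.sub_re, Complex.ofReal_re] at this
  linarith

theorem kerMul_qDiagq_apply_self (γ : ℕ → ℕ → ℂ) (g : ℕ → ℝ) (φ : Seq) (m : ℕ)
    (hγφ : Summable fun l => γ m l * φ l) (hγgφ : Summable fun l => γ m l * ((g l : ℂ) * φ l)) :
    kerMul γ (qDiagq g φ) m m
      = γ m m * g m - conj (φ m) * kerApply γ (fun n => (g n : ℂ) * φ n) m
        - g m * conj (φ m) * kerApply γ φ m
        + (∑' j, (g j : ℂ) * (‖φ j‖ : ℂ) ^ 2) * conj (φ m) * kerApply γ φ m := by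
  have hrow := (((hasSum_ite_eq m (γ m m * g m)).sub (hγgφ.hasSum.mul_left (conj (φ m)))).sub
    (hγφ.hasSum.mul_left (g m * conj (φ m)))).add
    (hγφ.hasSum.mul_left ((∑' j, (g j : ℂ) * (‖φ j‖ : ℂ) ^ 2) * conj (φ m)))
  refine (hrow.congr_fun fun l => ?_).tsum_eq
  simp only [qDiagq]
  split_ifs with hlm
  · subst hlm; ring
  · ring

theorem re_kerTr_kerMul_qDiagq {γ : ℕ → ℕ → ℂ} {r g : ℕ → ℝ} {φ : Seq} (hγ : kerPosSemidef γ)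
    (hr : 0 ≤ r) (hγr : ∀ m n, ‖γ m n‖ ≤ r m * r n) (hφ : Summable fun n => ‖φ n‖ * r n)
    (hgφ : Summable fun n => ‖(g n : ℂ) * φ n‖ * r n)
    (hγg : Summable fun m => (γ m m).re * g m) :
    (kerTr (kerMul γ (qDiagq g φ))).re
      = ∑' m, (γ m m).re * g m + (∑' n, g n * ‖φ n‖ ^ 2) * (kerForm γ φ φ).re
        - 2 * (kerForm γ (fun n => (g n : ℂ) * φ n) φ).re := by
  set gφ : Seq := fun n => (g n : ℂ) * φ n
  set S := ∑' n, g n * ‖φ n‖ ^ 2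
  have hS : ∑' j, (g j : ℂ) * (‖φ j‖ : ℂ) ^ 2 = S := by
    rw [Complex.ofReal_tsum]; push_cast; rfl
  have hdiag : HasSum (fun m => γ m m * g m) (∑' m, (γ m m).re * g m : ℝ) := by
    simpa [hγ.ofReal_re_diag] using Complex.hasSum_ofReal.mpr hγg.hasSum
  have htrace := ((hdiag.sub (hasSum_kerApply hr hγr hφ hgφ)).sub
    (hasSum_kerApply hr hγr hgφ hφ)).add ((hasSum_kerApply hr hγr hφ hφ).mul_left (S : ℂ))
  have hsum : HasSum (fun m => kerMul γ (qDiagq g φ) m m)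
      (∑' m, (γ m m).re * g m - kerForm γ φ gφ - kerForm γ gφ φ + S * kerForm γ φ φ) :=
    htrace.congr_fun fun m => by
      rw [kerMul_qDiagq_apply_self γ g φ m (summable_kerApply_summand hγr hφ m)
        (summable_kerApply_summand hγr hgφ m), hS]
      simp only [map_mul, Complex.conj_ofReal]
      ring
  rw [kerTr, hsum.tsum_eq, ← conj_kerForm hγ.1 gφ φ]
  simp only [Complex.add_re, Complex.sub_re, Complex.conj_re, Complex.re_ofReal_mul,
    Complex.ofReal_re]
  ring

theorem neg_two_re_kerForm_le {γ : ℕ → ℕ → ℂ} {r g : ℕ → ℝ} {φ : Seq} (hγ : kerPosSemidef γ)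
    (hr : 0 ≤ r) (hγr : ∀ m n, ‖γ m n‖ ≤ r m * r n) (hg : 0 ≤ g)
    (hφ : Summable fun n => ‖φ n‖ * r n) (hgφ : Summable fun n => ‖(g n : ℂ) * φ n‖ * r n)
    (hγg : Summable fun m => (γ m m).re * g m) (hgφ2 : Summable fun n => g n * ‖φ n‖ ^ 2) :
    -2 * (kerForm γ (fun n => (g n : ℂ) * φ n) φ).re
      ≤ ∑' m, (γ m m).re * g m + (∑' n, g n * ‖φ n‖ ^ 2) * (kerForm γ φ φ).re := by
  -- `(1 + p) e_j = e_j + conj (φ j) • φ`; sum `g j ⟨(1 + p) e_j, γ (1 + p) e_j⟩ ≥ 0` over `j`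
  have hZ := Complex.hasSum_re (hasSum_kerApply hr hγr hgφ hφ)
  have hsum := (hγg.hasSum.add (hZ.mul_left 2)).add (hgφ2.hasSum.mul_right (kerForm γ φ φ).re)
  have := hsum.nonneg fun j => by
    have hj := hγ.re_add_two_re_mul_kerApply_add_nonneg hr hγr hφ j (conj (φ j))
    rw [Complex.norm_conj] at hj
    have : (conj ((g j : ℂ) * φ j) * kerApply γ φ j).re
        = g j * (conj (φ j) * kerApply γ φ j).re := by
      rw [map_mul, Complex.conj_ofReal, mul_assoc, Complex.re_ofReal_mul]
    rw [this]
    nlinarith [mul_nonneg (hg j) hj]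
  linarith

theorem summable_mul_mul_of_summable_mul_sq {ι : Type*} {w a b : ι → ℝ} (hw : 0 ≤ w)
    (ha : Summable fun i => w i * a i ^ 2) (hb : Summable fun i => w i * b i ^ 2) :
    Summable fun i => w i * |a i * b i| := by
  refine ((ha.add hb).div_const 2).of_nonneg_of_le (fun i => mul_nonneg (hw i) (abs_nonneg _))
    fun i => ?_
  have : 2 * |a i * b i| ≤ a i ^ 2 + b i ^ 2 := by
    rw [abs_mul]; nlinarith [two_mul_le_add_sq |a i| |b i|, sq_abs (a i), sq_abs (b i)]
  nlinarith [mul_le_mul_of_nonneg_left this (hw i)]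

/-- For `0 ≤ γ ≤ 1` trace class, `p = |φ⟩⟨φ|` a rank-one projection, and
`q = 1 - p`, one has `Tr(γ q 𝒩^k q) ≤ 2 Tr(γ 𝒩^k) + 2 Tr(p 𝒩^k)`. -/
theorem removing_q_from_moment
    (k : ℕ) (γ : ℕ → ℕ → ℂ) (φ : Seq)
    (hφ2 : MemL2 φ) (hφnorm : sNormSq φ = 1)
    (hγpos : kerPosSemidef γ)
    (hγle1 : kerPosSemidef (fun m n => idKer m n - γ m n))
    (hγtc : Summable fun m => (γ m m).re)
    (hγNk : Summable fun m : ℕ => (γ m m).re * (m : ℝ) ^ k)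
    (hpNk : Summable fun n : ℕ => (n : ℝ) ^ k * ‖φ n‖ ^ 2) :
    (kerTr (kerMul γ (qDiagq (fun n => (n : ℝ) ^ k) φ))).re ≤
      2 * (∑' m : ℕ, (γ m m).re * (m : ℝ) ^ k) +
        2 * ∑' n : ℕ, (n : ℝ) ^ k * ‖φ n‖ ^ 2 := by
  set g : ℕ → ℝ := fun n => (n : ℝ) ^ k
  set r : ℕ → ℝ := fun m => √(γ m m).re
  have hg : 0 ≤ g := fun n => by positivity
  have hr : 0 ≤ r := fun m => Real.sqrt_nonneg _
  have hγr : ∀ m n, ‖γ m n‖ ≤ r m * r n := hγpos.norm_le_sqrt_mul_sqrt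
  have hr2 : ∀ m, r m ^ 2 = (γ m m).re := fun m => Real.sq_sqrt (hγpos.re_diag_nonneg m)
  have hφr : Summable fun n => ‖φ n‖ * r n := by
    simpa [abs_mul, abs_of_nonneg (hr _)] using
      summable_mul_mul_of_summable_mul_sq (w := 1) (a := fun n => ‖φ n‖) (b := r)
        (fun _ => zero_le_one) (by simpa [MemL2] using hφ2) (by simpa [hr2] using hγtc)
  have hgφr : Summable fun n => ‖(g n : ℂ) * φ n‖ * r n := by
    simpa [abs_mul, abs_of_nonneg (hr _), abs_of_nonneg (hg _), mul_assoc] using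
      summable_mul_mul_of_summable_mul_sq (a := fun n => ‖φ n‖) (b := r) hg hpNk
        (by simpa [hr2, mul_comm] using hγNk)
  have hX := re_kerForm_le_sNormSq hγle1 hφ2 (summable_kerForm hr hγr hφr hφr)
  have hcross := neg_two_re_kerForm_le hγpos hr hγr hg hφr hgφr hγNk hpNk
  have hS : 0 ≤ ∑' n, g n * ‖φ n‖ ^ 2 := tsum_nonneg fun n => by positivity
  rw [hφnorm] at hX
  rw [re_kerTr_kerMul_qDiagq hγpos hr hγr hφr hgφr hγNk]
  linarith [mul_le_mul_of_nonneg_left hX hS]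

end

end BoseHubbard
end

section
/- Let (u_n)_{n∈ℕ} be a sequence of nonnegative real numbers. If there exists a > 0 such that u_n ≤ e^{−n/a} for all n ∈ ℕ, then for every k ∈ ℕ, Σ_{n∈ℕ} n^k u_n ≤ (1+a) a^k k!. -/
namespace BoseHubbard

noncomputable section

open scoped BigOperators ComplexConjugate
open Complex Filter

/-! The function `x ↦ x ^ k * e^{-x/a}` increases on `[0, k a]` and decreases afterwards. For such a
unimodal function the values at the integers are bounded by the peak value plus the integral over
`[0, ∞)`; here these are `k! a^k` and `k! a^{k+1}`. -/

open Set
open scoped Nat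

lemma sum_range_succ_le_add_sum_min {s : ℕ → ℝ} {m : ℕ} {C : ℝ}
    (hup : ∀ n < m, s n ≤ s (n + 1)) (hdown : ∀ n, m ≤ n → s (n + 1) ≤ s n)
    (hC : ∀ n, s n ≤ C) (M : ℕ) :
    ∑ n ∈ Finset.range (M + 1), s n ≤ C + ∑ n ∈ Finset.range M, min (s n) (s (n + 1)) := by
  induction M with
  | zero => simpa using hC 0
  | succ M ih =>
    rw [Finset.sum_range_succ s (M + 1), Finset.sum_range_succ (fun n => min (s n) (s (n + 1))) M]
    rcases lt_or_ge M m with hM | hM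
    · have hinc : ∑ n ∈ Finset.range (M + 1), s n
          = ∑ n ∈ Finset.range (M + 1), min (s n) (s (n + 1)) :=
        Finset.sum_congr rfl fun n hn => (min_eq_left (hup n (by grind))).symm
      rw [hinc, Finset.sum_range_succ]
      linarith [hC (M + 1)]
    · rw [min_eq_right (hdown M hM)]
      linarith

section Unimodal

variable {f : ℝ → ℝ} {c : ℝ}

lemma apply_le_apply_of_unimodal (hmono : MonotoneOn f (Icc 0 c)) (hanti : AntitoneOn f (Ici c))
    (hc : 0 ≤ c) {x : ℝ} (hx : 0 ≤ x) : f x ≤ f c := by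
  rcases le_total x c with hxc | hcx
  · exact hmono ⟨hx, hxc⟩ ⟨hc, le_rfl⟩ hxc
  · exact hanti self_mem_Ici hcx hcx

lemma min_le_apply_of_unimodal (hmono : MonotoneOn f (Icc 0 c)) (hanti : AntitoneOn f (Ici c))
    {x y z : ℝ} (hx : 0 ≤ x) (hxy : x ≤ y) (hyz : y ≤ z) : min (f x) (f z) ≤ f y := by
  rcases le_total y c with hyc | hcy
  · exact (min_le_left _ _).trans (hmono ⟨hx, hxy.trans hyc⟩ ⟨hx.trans hxy, hyc⟩ hxy)
  · exact (min_le_right _ _).trans (hanti hcy (hcy.trans hyz) hyz)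

lemma exists_nat_peak_of_unimodal (hmono : MonotoneOn f (Icc 0 c))
    (hanti : AntitoneOn f (Ici c)) :
    ∃ m : ℕ, (∀ n < m, f n ≤ f (n + 1)) ∧ ∀ n : ℕ, m ≤ n → f (n + 1) ≤ f n := by
  set N := ⌊c⌋₊
  have hup : ∀ n < N, f n ≤ f (n + 1) := fun n hn => by
    have hn1 : (n : ℝ) + 1 ≤ c := by exact_mod_cast (Nat.le_floor_iff' n.succ_ne_zero).1 hn
    exact hmono ⟨n.cast_nonneg, by linarith⟩ ⟨by positivity, hn1⟩ (by linarith)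
  have hdown : ∀ n : ℕ, N + 1 ≤ n → f (n + 1) ≤ f n := fun n hn => by
    have hcn : c ≤ n := (Nat.lt_floor_add_one c).le.trans (by exact_mod_cast hn)
    exact hanti hcn (by simp only [mem_Ici]; linarith) (by linarith)
  rcases le_total (f N) (f (N + 1)) with h | h
  · refine ⟨N + 1, fun n hn => ?_, hdown⟩
    rcases (Nat.lt_succ_iff.1 hn).lt_or_eq with hn | rfl
    exacts [hup n hn, h]
  · refine ⟨N, hup, fun n hn => ?_⟩
    rcases hn.lt_or_eq with hn | rfl
    exacts [hdown n hn, h]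

lemma integrableOn_Icc_of_unimodal (hmono : MonotoneOn f (Icc 0 c))
    (hanti : AntitoneOn f (Ici c)) (hc : 0 ≤ c) (M : ℝ) :
    MeasureTheory.IntegrableOn f (Icc 0 M) := by
  rcases le_total M c with hM | hM
  · exact (hmono.mono (Icc_subset_Icc_right hM)).integrableOn_isCompact isCompact_Icc
  · rw [← Icc_union_Icc_eq_Icc hc hM]
    exact (hmono.integrableOn_isCompact isCompact_Icc).union
      ((hanti.mono Icc_subset_Ici_self).integrableOn_isCompact isCompact_Icc)

/-- On `[n, n + 1]` a unimodal `f` is at least `min (f n) (f (n + 1))`, and summing these minima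
misses only one value of `f` at an integer, which the peak value bounds. -/
theorem sum_range_succ_le_of_unimodal (hmono : MonotoneOn f (Icc 0 c))
    (hanti : AntitoneOn f (Ici c)) (hc : 0 ≤ c) (M : ℕ) :
    ∑ n ∈ Finset.range (M + 1), f n ≤ f c + ∫ x in (0 : ℝ)..M, f x := by
  obtain ⟨m, hup, hdown⟩ := exists_nat_peak_of_unimodal hmono hanti
  have hmin : ∑ n ∈ Finset.Ico 0 M, min (f n) (f (n + 1)) ≤ ∫ x in ((0 : ℕ) : ℝ)..M, f x := by
    refine sum_Ico_le_integral_of_le (f := fun x => min (f x) (f (x + 1))) M.zero_le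
      (fun n _ x hx => ?_) ((integrableOn_Icc_of_unimodal hmono hanti hc M).mono_set ?_)
    · push_cast at hx
      exact min_le_apply_of_unimodal hmono hanti n.cast_nonneg hx.1 hx.2.le
    · exact_mod_cast Ico_subset_Icc_self
  calc ∑ n ∈ Finset.range (M + 1), f n
      ≤ f c + ∑ n ∈ Finset.range M, min (f n) (f (n + 1)) := by
        have := sum_range_succ_le_add_sum_min (s := fun n : ℕ => f n) (m := m)
          (fun n hn => by exact_mod_cast hup n hn) (fun n hn => by exact_mod_cast hdown n hn)
          (fun n => apply_le_apply_of_unimodal hmono hanti hc n.cast_nonneg) M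
        exact_mod_cast this
    _ ≤ f c + ∫ x in (0 : ℝ)..M, f x := by
        rw [Finset.range_eq_Ico]
        simpa using hmin

end Unimodal

section PowMulExp

variable {a : ℝ}

lemma hasDerivAt_pow_succ_mul_exp_neg_div (j : ℕ) (x : ℝ) :
    HasDerivAt (fun x => x ^ (j + 1) * Real.exp (-x / a))
      (x ^ j * (j + 1 - x / a) * Real.exp (-x / a)) x := by
  refine ((hasDerivAt_pow (j + 1) x).fun_mul
    ((hasDerivAt_id x).fun_neg.div_const a).exp).congr_deriv ?_
  simp only [id, Nat.add_sub_cancel]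
  push_cast
  ring

lemma monotoneOn_pow_mul_exp_neg_div (ha : 0 < a) (k : ℕ) :
    MonotoneOn (fun x => x ^ k * Real.exp (-x / a)) (Icc 0 (k * a)) := by
  rcases k with _ | j
  · simp
  refine monotoneOn_of_hasDerivWithinAt_nonneg (convex_Icc _ _) (by fun_prop)
    (fun x _ => (hasDerivAt_pow_succ_mul_exp_neg_div j x).hasDerivWithinAt) ?_
  rw [interior_Icc]
  rintro x ⟨hx, hxk⟩
  have : x / a ≤ j + 1 := by rw [div_le_iff₀ ha]; push_cast at hxk; linarith
  exact mul_nonneg (mul_nonneg (pow_nonneg hx.le j) (by linarith)) (Real.exp_pos _).le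

lemma antitoneOn_pow_mul_exp_neg_div (ha : 0 < a) (k : ℕ) :
    AntitoneOn (fun x => x ^ k * Real.exp (-x / a)) (Ici (k * a)) := by
  rcases k with _ | j
  · intro x _ y _ hxy
    simp only [pow_zero, one_mul, Real.exp_le_exp]
    gcongr
  refine antitoneOn_of_hasDerivWithinAt_nonpos (convex_Ici _) (by fun_prop)
    (fun x _ => (hasDerivAt_pow_succ_mul_exp_neg_div j x).hasDerivWithinAt) ?_
  rw [interior_Ici]
  intro x (hxk : _ < x)
  have hx : 0 < x := lt_of_le_of_lt (by positivity) hxk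
  have : j + 1 ≤ x / a := by rw [le_div_iff₀ ha]; push_cast at hxk; linarith
  exact mul_nonpos_of_nonpos_of_nonneg
    (mul_nonpos_of_nonneg_of_nonpos (pow_nonneg hx.le j) (by linarith)) (Real.exp_pos _).le

lemma pow_mul_exp_neg_div_le (ha : 0 < a) (k : ℕ) {x : ℝ} (hx : 0 ≤ x) :
    x ^ k * Real.exp (-x / a) ≤ k ! * a ^ k := by
  calc x ^ k * Real.exp (-x / a) = (x / a) ^ k / k ! * Real.exp (-(x / a)) * (k ! * a ^ k) := by
        rw [div_pow, neg_div]
        field_simp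
    _ ≤ Real.exp (x / a) * Real.exp (-(x / a)) * (k ! * a ^ k) := by
        gcongr
        exact Real.pow_div_factorial_le_exp _ (by positivity) k
    _ = k ! * a ^ k := by rw [← Real.exp_add, add_neg_cancel, Real.exp_zero, one_mul]

lemma intervalIntegral_pow_mul_exp_neg_div_le (ha : 0 < a) (k : ℕ) {M : ℝ} (hM : 0 ≤ M) :
    ∫ x in (0 : ℝ)..M, x ^ k * Real.exp (-x / a) ≤ k ! * a ^ (k + 1) := by
  simpa only [inv_pow, div_inv_eq_mul, ← div_eq_inv_mul, ← neg_div] using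
    intervalIntegral_pow_mul_exp_neg_le (k := k) hM (inv_pos.2 ha)

end PowMulExp

/-- If `u_n ≥ 0` and `u_n ≤ e^{-n/a}` for some `a > 0`, then for every
`k ∈ ℕ`, `Σ_n n^k u_n ≤ (1+a) a^k k!` (in particular the sum converges). -/
theorem exponential_decay_implies_moment_bounds
    (u : ℕ → ℝ) (hu : ∀ n, 0 ≤ u n) (a : ℝ) (ha : 0 < a)
    (hdecay : ∀ n : ℕ, u n ≤ Real.exp (-(n : ℝ) / a)) :
    ∀ k : ℕ, Summable (fun n : ℕ => (n : ℝ) ^ k * u n) ∧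
      ∑' n : ℕ, (n : ℝ) ^ k * u n ≤ (1 + a) * a ^ k * (Nat.factorial k : ℝ) := by
  intro k
  have hnonneg : ∀ n : ℕ, 0 ≤ (n : ℝ) ^ k * u n := fun n => by have := hu n; positivity
  have hpartial : ∀ M : ℕ, ∑ n ∈ Finset.range M, (n : ℝ) ^ k * u n ≤ (1 + a) * a ^ k * k ! :=
    fun M => calc
      ∑ n ∈ Finset.range M, (n : ℝ) ^ k * u n
          ≤ ∑ n ∈ Finset.range (M + 1), (n : ℝ) ^ k * u n :=
        Finset.sum_le_sum_of_subset_of_nonneg (Finset.range_subset_range.2 M.le_succ)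
          fun n _ _ => hnonneg n
      _ ≤ ∑ n ∈ Finset.range (M + 1), (n : ℝ) ^ k * Real.exp (-(n : ℝ) / a) :=
        Finset.sum_le_sum fun n _ => by gcongr; exact hdecay n
      _ ≤ k ! * a ^ k + k ! * a ^ (k + 1) := by
        refine (sum_range_succ_le_of_unimodal (monotoneOn_pow_mul_exp_neg_div ha k)
          (antitoneOn_pow_mul_exp_neg_div ha k) (by positivity) M).trans (add_le_add ?_ ?_)
        · exact pow_mul_exp_neg_div_le ha k (by positivity)
        · exact intervalIntegral_pow_mul_exp_neg_div_le ha k M.cast_nonneg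
      _ = (1 + a) * a ^ k * k ! := by ring
  exact ⟨summable_of_sum_range_le hnonneg hpartial, Real.tsum_le_of_sum_range_le hnonneg hpartial⟩

end

end BoseHubbard
end
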